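/- Let G be a finite simple graph without isolated vertices. If G has a minimum dominating set D and an independent set S such that every vertex of D ∖ S has a neighbor in S ∖ D (i.e., S ∖ D dominates D ∖ S), then γ⁻¹(G) ≤ α(G). -/

import Mathlib

/-- `D` is a dominating set of `G`: every vertex lies in `D` or has a neighbor in `D`. -/
def IsDomSet {V : Type*} (G : SimpleGraph V) (D : Set V) : Prop :=
  ∀ v : V, v ∈ D ∨ ∃ u ∈ D, G.Adj u v

/-- `S` is an independent set of `G`. -/
def IsIndep {V : Type*} (G : SimpleGraph V) (S : Set V) : Prop :=
  S.Pairwise fun u v => ¬ G.Adj u v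

/-- The domination number of `G`: the minimum size of a dominating set. -/
noncomputable def gamma {V : Type*} (G : SimpleGraph V) : ℕ :=
  sInf {n | ∃ D : Set V, IsDomSet G D ∧ D.ncard = n}

/-- The independence number of `G`: the maximum size of an independent set. -/
noncomputable def alpha {V : Type*} (G : SimpleGraph V) : ℕ :=
  sSup {n | ∃ S : Set V, IsIndep G S ∧ S.ncard = n}

/-- The inverse domination number of `G`: the minimum size of a dominating set
disjoint from some minimum dominating set. -/
noncomputable def invGamma {V : Type*} (G : SimpleGraph V) : ℕ :=
  sInf {n | ∃ D T : Set V, IsDomSet G D ∧ D.ncard = gamma G ∧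
    IsDomSet G T ∧ D ∩ T = ∅ ∧ T.ncard = n}

/-- The independence number of the subgraph of `G` induced by `D`. -/
noncomputable def alphaOn {V : Type*} (G : SimpleGraph V) (D : Set V) : ℕ :=
  sSup {n | ∃ S : Set V, S ⊆ D ∧ IsIndep G S ∧ S.ncard = n}

/-- The number of edges of the subgraph of `G` induced by `D`. -/
noncomputable def edgeCountOn {V : Type*} (G : SimpleGraph V) (D : Set V) : ℕ :=
  {e ∈ G.edgeSet | ∀ v ∈ e, v ∈ D}.ncard

/-- `D` is an optimal dominating set: of minimum size; among those, `G[D]` has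
maximum independence number; and subject to that, `G[D]` has fewest edges. -/
def IsOptimalDomSet {V : Type*} (G : SimpleGraph V) (D : Set V) : Prop :=
  IsDomSet G D ∧ D.ncard = gamma G ∧
  (∀ D' : Set V, IsDomSet G D' → D'.ncard = gamma G → alphaOn G D' ≤ alphaOn G D) ∧
  (∀ D' : Set V, IsDomSet G D' → D'.ncard = gamma G →
    alphaOn G D' = alphaOn G D → edgeCountOn G D ≤ edgeCountOn G D')

/-- `w` is a private neighbor of `v` with respect to `D`: `w ∉ D` and `N(w) ∩ D = {v}`. -/
def IsPrivateNbr {V : Type*} (G : SimpleGraph V) (D : Set V) (v w : V) : Prop :=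
  w ∉ D ∧ G.Adj v w ∧ ∀ u ∈ D, G.Adj u w → u = v

/-- `R` is a partial independent set of representatives (partial ISR) for the family `P`:
an independent set consisting of distinct representatives of some subfamily of `P`. -/
def IsPartialISR {V : Type*} (G : SimpleGraph V) {n : ℕ} (P : Fin n → Set V)
    (R : Set V) : Prop :=
  IsIndep G R ∧ ∃ (J : Set (Fin n)) (x : Fin n → V),
    Set.InjOn x J ∧ (∀ j ∈ J, x j ∈ P j) ∧ R = x '' J

/-- `b(G)`: the largest number of vertices of an induced bipartite subgraph of `G`. -/
noncomputable def bipNum {V : Type*} (G : SimpleGraph V) : ℕ :=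
  sSup {n | ∃ B A : Set V, A ⊆ B ∧ IsIndep G A ∧ IsIndep G (B \ A) ∧ B.ncard = n}


/-!
Let `I` be an independent set outside `D` that contains `S \ D` and dominates every vertex
outside `D`, and let `B` be the vertices of `D` with no neighbor in `I`. Since `S \ D ⊆ I`
dominates `D \ S`, we get `B ⊆ S`, so `I ∪ B` is independent. By minimality of `D` (and since
there are no isolated vertices) every vertex of `B` has a neighbor outside `D`; adding one such
neighbor per vertex of `B` to `I` gives a dominating set disjoint from `D` of size at most
`|I ∪ B| ≤ α(G)`.
-/

section

variable {V : Type*} {G : SimpleGraph V}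

lemma gamma_le_ncard {D : Set V} (hD : IsDomSet G D) : gamma G ≤ D.ncard :=
  Nat.sInf_le ⟨D, hD, rfl⟩

lemma invGamma_le_ncard {D T : Set V} (hD : IsDomSet G D) (hDmin : D.ncard = gamma G)
    (hT : IsDomSet G T) (hDT : Disjoint D T) : invGamma G ≤ T.ncard :=
  Nat.sInf_le ⟨D, T, hD, hDmin, hT, Set.disjoint_iff_inter_eq_empty.mp hDT, rfl⟩

lemma IsIndep.ncard_le_alpha [Finite V] {S : Set V} (hS : IsIndep G S) : S.ncard ≤ alpha G :=
  le_csSup ⟨Nat.card V, by rintro n ⟨T, -, rfl⟩; exact Set.ncard_le_card T⟩ ⟨S, hS, rfl⟩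

lemma IsDomSet.diff_singleton {D : Set V} {u : V} (hD : IsDomSet G D) (hu : ∃ x, G.Adj u x)
    (hN : ∀ w, G.Adj u w → w ∈ D) : IsDomSet G (D \ {u}) := by
  intro v
  by_cases hvu : v = u
  · subst hvu
    obtain ⟨x, hx⟩ := hu
    exact Or.inr ⟨x, ⟨hN x hx, hx.ne.symm⟩, hx.symm⟩
  rcases hD v with hvD | ⟨x, hxD, hxv⟩
  · exact Or.inl ⟨hvD, hvu⟩
  by_cases hxu : x = u
  · subst hxu
    exact Or.inl ⟨hN v hxv, hvu⟩
  · exact Or.inr ⟨x, ⟨hxD, hxu⟩, hxv⟩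

lemma exists_adj_notMem_of_ncard_eq_gamma (hiso : ∀ v : V, ∃ u, G.Adj v u) {D : Set V}
    (hD : IsDomSet G D) (hfin : D.Finite) (hDmin : D.ncard = gamma G) {u : V} (hu : u ∈ D) :
    ∃ w ∉ D, G.Adj u w := by
  by_contra! hN
  have hle := gamma_le_ncard <|
    hD.diff_singleton (hiso u) fun w huw => by_contra fun hw => hN w hw huw
  rw [Set.ncard_sdiff_singleton_of_mem hu] at hle
  have hpos : 0 < D.ncard := (Set.ncard_pos hfin).mpr ⟨u, hu⟩
  omega

lemma IsIndep.exists_superset_dominating [Finite V] {A X : Set V} (hA : IsIndep G A)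
    (hAX : A ⊆ X) :
    ∃ I, A ⊆ I ∧ I ⊆ X ∧ IsIndep G I ∧
      ∀ v ∈ X, v ∈ I ∨ ∃ x ∈ I, G.Adj x v := by
  obtain ⟨I, hAI, ⟨-, hIX, hI⟩, hmax⟩ := Finite.exists_le_maximal
    (p := fun J : Set V => A ⊆ J ∧ J ⊆ X ∧ IsIndep G J) ⟨le_rfl, hAX, hA⟩
  refine ⟨I, hAI, hIX, hI, fun v hvX => ?_⟩
  by_contra! hv
  have hins : IsIndep G (insert v I) :=
    hI.insert fun x hx _ => ⟨fun h => hv.2 x hx h.symm, hv.2 x hx⟩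
  exact hv.1 (hmax ⟨hAI.trans (Set.subset_insert v I), Set.insert_subset hvX hIX, hins⟩
    (Set.subset_insert v I) (Set.mem_insert v I))

lemma isDomSet_union_of_dominates_compl {D I F : Set V}
    (hI : ∀ v ∉ D, v ∈ I ∨ ∃ x ∈ I, G.Adj x v)
    (hF : ∀ v ∈ D, (∀ x ∈ I, ¬ G.Adj x v) → ∃ w ∈ F, G.Adj w v) :
    IsDomSet G (I ∪ F) := by
  intro v
  by_cases hvD : v ∈ D
  · by_cases hvI : ∀ x ∈ I, ¬ G.Adj x v
    · obtain ⟨w, hw, hwv⟩ := hF v hvD hvI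
      exact Or.inr ⟨w, Or.inr hw, hwv⟩
    · push Not at hvI
      obtain ⟨x, hx, hxv⟩ := hvI
      exact Or.inr ⟨x, Or.inl hx, hxv⟩
  · rcases hI v hvD with hv | ⟨x, hx, hxv⟩
    exacts [Or.inl (Or.inl hv), Or.inr ⟨x, Or.inl hx, hxv⟩]

lemma exists_ncard_le_of_forall_mem_exists {α β : Type*} {B : Set α} (hB : B.Finite)
    {X : Set β} {r : α → β → Prop} (h : ∀ u ∈ B, ∃ w ∈ X, r u w) :
    ∃ F ⊆ X, F.ncard ≤ B.ncard ∧ ∀ u ∈ B, ∃ w ∈ F, r u w := by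
  choose f hfX hfr using h
  have : Finite B := hB.to_subtype
  refine ⟨Set.range fun u : B => f u u.2, Set.range_subset_iff.mpr fun u => hfX u u.2, ?_,
    fun u hu => ⟨f u hu, ⟨⟨u, hu⟩, rfl⟩, hfr u hu⟩⟩
  calc (Set.range fun u : B => f u u.2).ncard ≤ (Set.univ : Set B).ncard := by
        rw [← Set.image_univ]; exact Set.ncard_image_le Set.finite_univ
    _ = B.ncard := by rw [Set.ncard_univ, Nat.card_coe_set_eq]

end

theorem inverse_domination_of_indep_dominating {V : Type*} [Fintype V] (G : SimpleGraph V)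
    (hiso : ∀ v : V, ∃ u, G.Adj v u)
    (D : Set V) (hDdom : IsDomSet G D) (hDmin : D.ncard = gamma G)
    (S : Set V) (hSind : IsIndep G S)
    (hSdom : ∀ v ∈ D \ S, ∃ u ∈ S \ D, G.Adj u v) :
    invGamma G ≤ alpha G := by
  have hA : IsIndep G (S \ D) := hSind.mono Set.sdiff_subset
  obtain ⟨I, hSI, hID, hI, hIdom⟩ := hA.exists_superset_dominating (X := Dᶜ) fun _ hv => hv.2
  set B := {u ∈ D | ∀ x ∈ I, ¬ G.Adj x u}
  have hBS : B ⊆ S := fun u hu => by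
    by_contra huS
    obtain ⟨x, hx, hxu⟩ := hSdom u ⟨hu.1, huS⟩
    exact hu.2 x (hSI hx) hxu
  obtain ⟨F, hFD, hFB, hF⟩ := exists_ncard_le_of_forall_mem_exists B.toFinite fun u hu =>
    exists_adj_notMem_of_ncard_eq_gamma hiso hDdom D.toFinite hDmin hu.1
  have hT : IsDomSet G (I ∪ F) := isDomSet_union_of_dominates_compl hIdom fun v hvD hvI =>
    (hF v ⟨hvD, hvI⟩).imp fun _ hw => ⟨hw.1, hw.2.symm⟩
  have hIB : IsIndep G (I ∪ B) := Set.pairwise_union.mpr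
    ⟨hI, hSind.mono hBS, fun x hx u hu _ => ⟨hu.2 x hx, fun h => hu.2 x hx h.symm⟩⟩
  have hDI : Disjoint D I := Set.disjoint_left.mpr fun _ hv hvI => hID hvI hv
  have hDF : Disjoint D F := Set.disjoint_left.mpr fun _ hv hvF => hFD hvF hv
  calc invGamma G ≤ (I ∪ F).ncard := invGamma_le_ncard hDdom hDmin hT (hDI.union_right hDF)
    _ ≤ I.ncard + B.ncard := (Set.ncard_union_le I F).trans (by omega)
    _ = (I ∪ B).ncard := (Set.ncard_union_eq (hDI.symm.mono_right fun _ hu => hu.1)).symm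
    _ ≤ alpha G := hIB.ncard_le_alpha
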